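/- With the same notation, for any F ∈ H¹(Ω) and weight ω, the averaged derivative satisfies A_ω(∂_j F) = Σ_{i=1}^d ∂_i (A_{ω·g_{ji}} F). -/

import Mathlib

open MeasureTheory

private lemma aux_mul_integrable {α} [MeasurableSpace α] {μ : Measure α} {f g : α → ℂ}
    (hf : MemLp f 2 μ) (hg : MemLp g 2 μ) : Integrable (fun x => f x * g x) μ := by
  have h := hg.smul (φ := f) hf (r := 1)
  rw [← memLp_one_iff_integrable]
  exact h

private lemma euclid_decomp {d : ℕ} (v : EuclideanSpace ℝ (Fin d)) :
    v = ∑ i, v i • EuclideanSpace.single i 1 := by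
  ext k
  rw [WithLp.ofLp_sum, Finset.sum_apply (a := k)]
  simp [PiLp.smul_apply, EuclideanSpace.single_apply, Finset.sum_ite_eq]

/-- For `F ∈ H¹(Ω)` with weak derivatives `∂_j F = D j`, and any weight `ω` on a finite group
`W` of orthogonal transformations leaving `Ω` invariant, one has the distributional identity
`A_ω (∂_j F) = ∑_i ∂_i (A_{ω·g_{ji}} F)` on `Ω`, i.e. tested against every
`φ ∈ C_c^∞(Ω)`:
`∫_Ω A_ω(∂_j F) φ = - ∑_i ∫_Ω (A_{ω·g_{ji}} F) ∂_i φ`. -/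
theorem average_of_weak_partial {d : ℕ}
    (W : Subgroup (EuclideanSpace ℝ (Fin d) ≃ₗᵢ[ℝ] EuclideanSpace ℝ (Fin d)))
    [Fintype W]
    (Ω : Set (EuclideanSpace ℝ (Fin d))) (hΩ : IsOpen Ω)
    (hinv : ∀ g ∈ W, (g : EuclideanSpace ℝ (Fin d) ≃ₗᵢ[ℝ] EuclideanSpace ℝ (Fin d)) '' Ω = Ω)
    (ω : W → ℂ)
    (F : EuclideanSpace ℝ (Fin d) → ℂ) (D : Fin d → EuclideanSpace ℝ (Fin d) → ℂ)
    (hF : MemLp F 2 (volume.restrict Ω))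
    (hD : ∀ j, MemLp (D j) 2 (volume.restrict Ω))
    (hweak : ∀ (j : Fin d) (φ : EuclideanSpace ℝ (Fin d) → ℝ), ContDiff ℝ (⊤ : ℕ∞) φ →
      HasCompactSupport φ → tsupport φ ⊆ Ω →
      ∫ x in Ω, F x * ((fderiv ℝ φ x (EuclideanSpace.single j 1) : ℝ) : ℂ)
        = - ∫ x in Ω, D j x * (φ x : ℂ)) :
    ∀ (j : Fin d) (φ : EuclideanSpace ℝ (Fin d) → ℝ), ContDiff ℝ (⊤ : ℕ∞) φ →
      HasCompactSupport φ → tsupport φ ⊆ Ω →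
      ∫ x in Ω, (((Fintype.card W : ℂ))⁻¹ * ∑ g : W, ω g *
          D j ((g : EuclideanSpace ℝ (Fin d) ≃ₗᵢ[ℝ] EuclideanSpace ℝ (Fin d)) x)) * (φ x : ℂ)
        = - ∑ i, ∫ x in Ω,
            (((Fintype.card W : ℂ))⁻¹ * ∑ g : W, ω g *
              (((g : EuclideanSpace ℝ (Fin d) ≃ₗᵢ[ℝ] EuclideanSpace ℝ (Fin d))
                (EuclideanSpace.single i 1)) j : ℂ) *
              F ((g : EuclideanSpace ℝ (Fin d) ≃ₗᵢ[ℝ] EuclideanSpace ℝ (Fin d)) x)) *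
            ((fderiv ℝ φ x (EuclideanSpace.single i 1) : ℝ) : ℂ) := by
  intro j φ hφ hφc hφΩ
  set c : ℂ := ((Fintype.card W : ℂ))⁻¹ with hc
  -- basic facts about each `g ∈ W`
  have hpre : ∀ g : W,
      (⇑(g : EuclideanSpace ℝ (Fin d) ≃ₗᵢ[ℝ] EuclideanSpace ℝ (Fin d))) ⁻¹' Ω = Ω := by
    intro g
    have hsymm : ⇑((g : EuclideanSpace ℝ (Fin d) ≃ₗᵢ[ℝ] EuclideanSpace ℝ
        (Fin d))).symm '' Ω = Ω := by
      have h1 := hinv ((g : EuclideanSpace ℝ (Fin d) ≃ₗᵢ[ℝ] EuclideanSpace ℝ (Fin d)))⁻¹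
        (W.inv_mem g.2)
      rwa [LinearIsometryEquiv.coe_inv] at h1
    ext x
    constructor
    · intro hx
      have hx' : (g : EuclideanSpace ℝ (Fin d) ≃ₗᵢ[ℝ] EuclideanSpace ℝ (Fin d)) x ∈ Ω :=
        Set.mem_preimage.mp hx
      have := Set.mem_image_of_mem
        (⇑((g : EuclideanSpace ℝ (Fin d) ≃ₗᵢ[ℝ] EuclideanSpace ℝ (Fin d))).symm) hx'
      rw [hsymm] at this
      simpa using this
    · intro hx
      have := Set.mem_image_of_mem
        (⇑(g : EuclideanSpace ℝ (Fin d) ≃ₗᵢ[ℝ] EuclideanSpace ℝ (Fin d))) hx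
      rw [hinv _ g.2] at this
      exact this
  have mp : ∀ g : W, MeasurePreserving
      (⇑(g : EuclideanSpace ℝ (Fin d) ≃ₗᵢ[ℝ] EuclideanSpace ℝ (Fin d)))
      (volume.restrict Ω) (volume.restrict Ω) := by
    intro g
    have := ((g : EuclideanSpace ℝ (Fin d) ≃ₗᵢ[ℝ] EuclideanSpace ℝ
      (Fin d)).measurePreserving).restrict_preimage hΩ.measurableSet
    rwa [hpre g] at this
  have me : ∀ g : W, MeasurableEmbedding
      (⇑(g : EuclideanSpace ℝ (Fin d) ≃ₗᵢ[ℝ] EuclideanSpace ℝ (Fin d))) := fun g =>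
    (g : EuclideanSpace ℝ (Fin d) ≃ₗᵢ[ℝ] EuclideanSpace ℝ
      (Fin d)).toHomeomorph.measurableEmbedding
  have chg : ∀ (g : W) (f : EuclideanSpace ℝ (Fin d) → ℂ),
      ∫ x in Ω, f ((g : EuclideanSpace ℝ (Fin d) ≃ₗᵢ[ℝ] EuclideanSpace ℝ (Fin d)) x)
        = ∫ y in Ω, f y := fun g f => (mp g).integral_comp (me g) f
  -- membership facts
  have hφmem : MemLp (fun x => ((φ x : ℝ) : ℂ)) 2 (volume.restrict Ω) := by
    refine MemLp.restrict _ (Continuous.memLp_of_hasCompactSupport ?_ ?_)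
    · exact Complex.continuous_ofReal.comp hφ.continuous
    · exact hφc.comp_left (g := (Complex.ofReal : ℝ → ℂ)) (by simp)
  have hΦmem : ∀ i : Fin d, MemLp
      (fun x => ((fderiv ℝ φ x (EuclideanSpace.single i 1) : ℝ) : ℂ)) 2
      (volume.restrict Ω) := by
    intro i
    refine MemLp.restrict _ (Continuous.memLp_of_hasCompactSupport ?_ ?_)
    · exact Complex.continuous_ofReal.comp
        ((hφ.continuous_fderiv (by simp)).clm_apply continuous_const)
    · refine HasCompactSupport.intro hφc fun x hx => ?_
      have : fderiv ℝ φ x = 0 := by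
        by_contra h
        exact hx (support_fderiv_subset ℝ (Function.mem_support.2 h))
      simp [this]
  have hDg : ∀ g : W, MemLp
      (fun x => D j ((g : EuclideanSpace ℝ (Fin d) ≃ₗᵢ[ℝ] EuclideanSpace ℝ (Fin d)) x)) 2
      (volume.restrict Ω) := fun g => (hD j).comp_measurePreserving (mp g)
  have hFg : ∀ g : W, MemLp
      (fun x => F ((g : EuclideanSpace ℝ (Fin d) ≃ₗᵢ[ℝ] EuclideanSpace ℝ (Fin d)) x)) 2
      (volume.restrict Ω) := fun g => hF.comp_measurePreserving (mp g)
  -- the key identity for a single group element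
  have key : ∀ g : W,
      ∫ x in Ω, D j ((g : EuclideanSpace ℝ (Fin d) ≃ₗᵢ[ℝ] EuclideanSpace ℝ (Fin d)) x)
          * (φ x : ℂ)
        = - ∑ i, (((g : EuclideanSpace ℝ (Fin d) ≃ₗᵢ[ℝ] EuclideanSpace ℝ (Fin d))
              (EuclideanSpace.single i 1)) j : ℂ) *
            ∫ x in Ω, F ((g : EuclideanSpace ℝ (Fin d) ≃ₗᵢ[ℝ] EuclideanSpace ℝ (Fin d)) x)
              * ((fderiv ℝ φ x (EuclideanSpace.single i 1) : ℝ) : ℂ) := by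
    intro g
    set e : EuclideanSpace ℝ (Fin d) ≃ₗᵢ[ℝ] EuclideanSpace ℝ (Fin d) :=
      (g : EuclideanSpace ℝ (Fin d) ≃ₗᵢ[ℝ] EuclideanSpace ℝ (Fin d)) with he
    set ψ : EuclideanSpace ℝ (Fin d) → ℝ := fun y => φ (e.symm y) with hψdef
    have hψ : ContDiff ℝ (⊤ : ℕ∞) ψ := hφ.comp e.symm.contDiff
    have hψc : HasCompactSupport ψ := hφc.comp_homeomorph e.symm.toHomeomorph
    have himg : ⇑e '' tsupport φ ⊆ Ω := by
      rw [← hinv _ g.2]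
      exact Set.image_mono hφΩ
    have hψΩ : tsupport ψ ⊆ Ω := by
      refine subset_trans (closure_minimal ?_ (hφc.image e.continuous).isClosed) himg
      intro x hx
      have hx' : φ (e.symm x) ≠ 0 := hx
      refine ⟨e.symm x, subset_tsupport _ hx', by simp⟩
    have hw := hweak j ψ hψ hψc hψΩ
    -- derivative of ψ
    have hfd : ∀ x, (fderiv ℝ ψ x) (EuclideanSpace.single j 1)
        = ∑ i, ((e (EuclideanSpace.single i 1)) j)
            * (fderiv ℝ φ (e.symm x)) (EuclideanSpace.single i 1) := by
      intro x
      have hcomp : fderiv ℝ ψ x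
          = (fderiv ℝ φ (e.symm x)).comp (e.symm : EuclideanSpace ℝ (Fin d) →L[ℝ]
              EuclideanSpace ℝ (Fin d)) := by
        have : ψ = φ ∘ ⇑e.symm := rfl
        rw [this, fderiv_comp x (hφ.differentiable (by simp) _) e.symm.differentiableAt,
          e.symm.fderiv]
      have hv : e.symm (EuclideanSpace.single j 1)
          = ∑ i, ((e (EuclideanSpace.single i 1)) j) • EuclideanSpace.single i 1 := by
        conv_lhs => rw [euclid_decomp (e.symm (EuclideanSpace.single j 1))]
        refine Finset.sum_congr rfl fun i _ => ?_
        congr 1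
        have h1 : (e.symm (EuclideanSpace.single j 1)) i
            = (inner ℝ (e.symm (EuclideanSpace.single j (1 : ℝ)))
                (EuclideanSpace.single i (1 : ℝ)) : ℝ) := by
          rw [EuclideanSpace.inner_single_right]; simp
        have h2 : (inner ℝ (e.symm (EuclideanSpace.single j (1 : ℝ)))
              (EuclideanSpace.single i (1 : ℝ)) : ℝ)
            = (inner ℝ (EuclideanSpace.single j (1 : ℝ)) (e (EuclideanSpace.single i 1)) : ℝ) := by
          rw [← e.inner_map_map (e.symm (EuclideanSpace.single j 1))
            (EuclideanSpace.single i 1), e.apply_symm_apply]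
        have h3 : (inner ℝ (EuclideanSpace.single j (1 : ℝ)) (e (EuclideanSpace.single i 1)) : ℝ)
            = (e (EuclideanSpace.single i 1)) j := by
          rw [EuclideanSpace.inner_single_left]; simp
        rw [h1, h2, h3]
      rw [hcomp]
      show (fderiv ℝ φ (e.symm x)) (e.symm (EuclideanSpace.single j 1)) = _
      rw [hv, map_sum]
      simp [_root_.map_smul, smul_eq_mul]
    -- step 1 : change of variables on the left
    have step1 : ∫ x in Ω, D j (e x) * (φ x : ℂ) = ∫ y in Ω, D j y * ((ψ y : ℝ) : ℂ) := by
      rw [← chg g (fun y => D j y * ((ψ y : ℝ) : ℂ))]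
      simp [hψdef, he]
    -- rewrite using the weak derivative property
    have step2 : ∫ y in Ω, D j y * ((ψ y : ℝ) : ℂ)
        = - ∫ x in Ω, F x * ((fderiv ℝ ψ x (EuclideanSpace.single j 1) : ℝ) : ℂ) := by
      rw [hw]; ring
    -- expand the derivative and swap sum and integral
    have step3 : ∫ x in Ω, F x * ((fderiv ℝ ψ x (EuclideanSpace.single j 1) : ℝ) : ℂ)
        = ∑ i, (((e (EuclideanSpace.single i 1)) j : ℝ) : ℂ) *
            ∫ x in Ω, F x
              * ((fderiv ℝ φ (e.symm x) (EuclideanSpace.single i 1) : ℝ) : ℂ) := by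
      have hint : ∀ i : Fin d, Integrable
          (fun x => (((e (EuclideanSpace.single i 1)) j : ℝ) : ℂ) *
            (F x * ((fderiv ℝ φ (e.symm x) (EuclideanSpace.single i 1) : ℝ) : ℂ)))
          (volume.restrict Ω) := by
        intro i
        refine Integrable.const_mul ?_ _
        refine aux_mul_integrable hF ?_
        refine MemLp.restrict _ (Continuous.memLp_of_hasCompactSupport ?_ ?_)
        · exact Complex.continuous_ofReal.comp
            (((hφ.continuous_fderiv (by simp)).comp e.symm.continuous).clm_apply
              continuous_const)
        · refine HasCompactSupport.intro (hφc.image e.continuous) fun x hx => ?_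
          have hnot : e.symm x ∉ tsupport φ := by
            intro hmem
            exact hx ⟨e.symm x, hmem, by simp⟩
          have : fderiv ℝ φ (e.symm x) = 0 := by
            by_contra h
            exact hnot (support_fderiv_subset ℝ (Function.mem_support.2 h))
          simp [this]
      calc ∫ x in Ω, F x * ((fderiv ℝ ψ x (EuclideanSpace.single j 1) : ℝ) : ℂ)
          = ∫ x in Ω, ∑ i, (((e (EuclideanSpace.single i 1)) j : ℝ) : ℂ) *
              (F x * ((fderiv ℝ φ (e.symm x) (EuclideanSpace.single i 1) : ℝ) : ℂ)) := by
            refine integral_congr_ae (Filter.Eventually.of_forall fun x => ?_)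
            dsimp only
            rw [hfd x]
            push_cast
            rw [Finset.mul_sum]
            refine Finset.sum_congr rfl fun i _ => by ring
        _ = ∑ i, (((e (EuclideanSpace.single i 1)) j : ℝ) : ℂ) *
              ∫ x in Ω, F x
                * ((fderiv ℝ φ (e.symm x) (EuclideanSpace.single i 1) : ℝ) : ℂ) := by
            rw [integral_finset_sum _ fun i _ => hint i]
            exact Finset.sum_congr rfl fun i _ => integral_const_mul _ _
    -- step 4 : change variables back in each summand
    have step4 : ∀ i : Fin d,
        ∫ x in Ω, F x * ((fderiv ℝ φ (e.symm x) (EuclideanSpace.single i 1) : ℝ) : ℂ)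
          = ∫ x in Ω, F (e x) * ((fderiv ℝ φ x (EuclideanSpace.single i 1) : ℝ) : ℂ) := by
      intro i
      rw [← chg g (fun y => F y * ((fderiv ℝ φ (e.symm y) (EuclideanSpace.single i 1) : ℝ) : ℂ))]
      simp [he]
    rw [step1, step2, step3]
    rw [neg_inj]
    refine Finset.sum_congr rfl fun i _ => ?_
    rw [step4 i]
  -- now assemble everything
  have hLHS : ∫ x in Ω, (c * ∑ g : W, ω g *
        D j ((g : EuclideanSpace ℝ (Fin d) ≃ₗᵢ[ℝ] EuclideanSpace ℝ (Fin d)) x)) * (φ x : ℂ)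
      = ∑ g : W, c * ω g * ∫ x in Ω,
          D j ((g : EuclideanSpace ℝ (Fin d) ≃ₗᵢ[ℝ] EuclideanSpace ℝ (Fin d)) x)
            * (φ x : ℂ) := by
    have hrw : ∀ x, (c * ∑ g : W, ω g *
          D j ((g : EuclideanSpace ℝ (Fin d) ≃ₗᵢ[ℝ] EuclideanSpace ℝ (Fin d)) x)) * (φ x : ℂ)
        = ∑ g : W, (c * ω g) *
            (D j ((g : EuclideanSpace ℝ (Fin d) ≃ₗᵢ[ℝ] EuclideanSpace ℝ (Fin d)) x)
              * (φ x : ℂ)) := by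
      intro x
      rw [Finset.mul_sum, Finset.sum_mul]
      exact Finset.sum_congr rfl fun g _ => by ring
    calc ∫ x in Ω, (c * ∑ g : W, ω g *
          D j ((g : EuclideanSpace ℝ (Fin d) ≃ₗᵢ[ℝ] EuclideanSpace ℝ (Fin d)) x)) * (φ x : ℂ)
        = ∫ x in Ω, ∑ g : W, (c * ω g) *
            (D j ((g : EuclideanSpace ℝ (Fin d) ≃ₗᵢ[ℝ] EuclideanSpace ℝ (Fin d)) x)
              * (φ x : ℂ)) :=
          integral_congr_ae (Filter.Eventually.of_forall fun x => hrw x)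
      _ = ∑ g : W, c * ω g * ∫ x in Ω,
            D j ((g : EuclideanSpace ℝ (Fin d) ≃ₗᵢ[ℝ] EuclideanSpace ℝ (Fin d)) x)
              * (φ x : ℂ) := by
          rw [integral_finset_sum _ fun g _ =>
            (aux_mul_integrable (hDg g) hφmem).const_mul (c * ω g)]
          exact Finset.sum_congr rfl fun g _ => integral_const_mul _ _
  have hRHS : ∀ i : Fin d, ∫ x in Ω, (c * ∑ g : W, ω g *
        (((g : EuclideanSpace ℝ (Fin d) ≃ₗᵢ[ℝ] EuclideanSpace ℝ (Fin d))
          (EuclideanSpace.single i 1)) j : ℂ) *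
        F ((g : EuclideanSpace ℝ (Fin d) ≃ₗᵢ[ℝ] EuclideanSpace ℝ (Fin d)) x)) *
        ((fderiv ℝ φ x (EuclideanSpace.single i 1) : ℝ) : ℂ)
      = ∑ g : W, c * ω g *
          ((((g : EuclideanSpace ℝ (Fin d) ≃ₗᵢ[ℝ] EuclideanSpace ℝ (Fin d))
            (EuclideanSpace.single i 1)) j : ℂ) *
          ∫ x in Ω, F ((g : EuclideanSpace ℝ (Fin d) ≃ₗᵢ[ℝ] EuclideanSpace ℝ (Fin d)) x)
            * ((fderiv ℝ φ x (EuclideanSpace.single i 1) : ℝ) : ℂ)) := by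
    intro i
    have hrw : ∀ x, (c * ∑ g : W, ω g *
          (((g : EuclideanSpace ℝ (Fin d) ≃ₗᵢ[ℝ] EuclideanSpace ℝ (Fin d))
            (EuclideanSpace.single i 1)) j : ℂ) *
          F ((g : EuclideanSpace ℝ (Fin d) ≃ₗᵢ[ℝ] EuclideanSpace ℝ (Fin d)) x)) *
          ((fderiv ℝ φ x (EuclideanSpace.single i 1) : ℝ) : ℂ)
        = ∑ g : W, (c * ω g *
            (((g : EuclideanSpace ℝ (Fin d) ≃ₗᵢ[ℝ] EuclideanSpace ℝ (Fin d))
              (EuclideanSpace.single i 1)) j : ℂ)) *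
            (F ((g : EuclideanSpace ℝ (Fin d) ≃ₗᵢ[ℝ] EuclideanSpace ℝ (Fin d)) x)
              * ((fderiv ℝ φ x (EuclideanSpace.single i 1) : ℝ) : ℂ)) := by
      intro x
      rw [Finset.mul_sum, Finset.sum_mul]
      exact Finset.sum_congr rfl fun g _ => by ring
    calc ∫ x in Ω, (c * ∑ g : W, ω g *
          (((g : EuclideanSpace ℝ (Fin d) ≃ₗᵢ[ℝ] EuclideanSpace ℝ (Fin d))
            (EuclideanSpace.single i 1)) j : ℂ) *
          F ((g : EuclideanSpace ℝ (Fin d) ≃ₗᵢ[ℝ] EuclideanSpace ℝ (Fin d)) x)) *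
          ((fderiv ℝ φ x (EuclideanSpace.single i 1) : ℝ) : ℂ)
        = ∫ x in Ω, ∑ g : W, (c * ω g *
            (((g : EuclideanSpace ℝ (Fin d) ≃ₗᵢ[ℝ] EuclideanSpace ℝ (Fin d))
              (EuclideanSpace.single i 1)) j : ℂ)) *
            (F ((g : EuclideanSpace ℝ (Fin d) ≃ₗᵢ[ℝ] EuclideanSpace ℝ (Fin d)) x)
              * ((fderiv ℝ φ x (EuclideanSpace.single i 1) : ℝ) : ℂ)) :=
          integral_congr_ae (Filter.Eventually.of_forall fun x => hrw x)
      _ = ∑ g : W, c * ω g *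
            ((((g : EuclideanSpace ℝ (Fin d) ≃ₗᵢ[ℝ] EuclideanSpace ℝ (Fin d))
              (EuclideanSpace.single i 1)) j : ℂ) *
            ∫ x in Ω, F ((g : EuclideanSpace ℝ (Fin d) ≃ₗᵢ[ℝ] EuclideanSpace ℝ (Fin d)) x)
              * ((fderiv ℝ φ x (EuclideanSpace.single i 1) : ℝ) : ℂ)) := by
          rw [integral_finset_sum _ fun g _ =>
            (aux_mul_integrable (hFg g) (hΦmem i)).const_mul _]
          refine Finset.sum_congr rfl fun g _ => ?_
          rw [integral_const_mul, mul_assoc]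
  rw [hLHS]
  conv_rhs => rw [show (∑ i, ∫ x in Ω, (c * ∑ g : W, ω g *
      (((g : EuclideanSpace ℝ (Fin d) ≃ₗᵢ[ℝ] EuclideanSpace ℝ (Fin d))
        (EuclideanSpace.single i 1)) j : ℂ) *
      F ((g : EuclideanSpace ℝ (Fin d) ≃ₗᵢ[ℝ] EuclideanSpace ℝ (Fin d)) x)) *
      ((fderiv ℝ φ x (EuclideanSpace.single i 1) : ℝ) : ℂ)) = ∑ i, ∑ g : W, c * ω g *
          ((((g : EuclideanSpace ℝ (Fin d) ≃ₗᵢ[ℝ] EuclideanSpace ℝ (Fin d))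
            (EuclideanSpace.single i 1)) j : ℂ) *
          ∫ x in Ω, F ((g : EuclideanSpace ℝ (Fin d) ≃ₗᵢ[ℝ] EuclideanSpace ℝ (Fin d)) x)
            * ((fderiv ℝ φ x (EuclideanSpace.single i 1) : ℝ) : ℂ))
      from Finset.sum_congr rfl fun i _ => hRHS i]
  rw [Finset.sum_comm, ← Finset.sum_neg_distrib]
  refine Finset.sum_congr rfl fun g _ => ?_
  rw [key g, mul_neg, Finset.mul_sum]
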